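/- arXiv:math/0606393 — 2 statements merged into one kernel-verified Lean document; each statement's English description precedes it below -/
import Mathlib

section
/- Let f : A ⥤ B, g : A ⥤ C and h : B ⥤ C be functors, let f/B = Comma f (𝟭 B) with projections p : f/B ⥤ A, q : f/B ⥤ B, and let i_f : A ⥤ f/B be the functor a ↦ (a, f.obj a, identity). Then a natural transformation α : p ⋙ g ⟶ q ⋙ h exhibits h as a left Kan extension of p ⋙ g along q if and only if its whiskering with i_f, a natural transformation g ⟶ f ⋙ h, exhibits h as a left Kan extension of g along f. -/
/-!
The functor `i_f : A ⥤ f/B` is left adjoint to the projection `p` with identity unit, and this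
makes whiskering with `i_f` a bijection from natural transformations `p ⋙ g ⟶ q ⋙ k` to natural
transformations `g ⟶ f ⋙ k`, for every `k : B ⥤ C`; its inverse sends `δ` to the transformation
with components `δ.app a ≫ k.map h` at `(a, b, h)`. This bijection commutes with postcomposition
by any `h ⟶ k`, so it identifies the two universal properties defining the left Kan extensions.
-/

open CategoryTheory

universe w v v₁ v₂ v₃ v₄ v₅ u u₁ u₂ u₃ u₄ u₅

namespace CategoryTheory.Functor

variable {C C' D H : Type*} [Category C] [Category C'] [Category D] [Category H]

lemma isLeftKanExtension_iff_bijective {L : C ⥤ D} {F : C ⥤ H} (G : D ⥤ H)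
    (α : F ⟶ L ⋙ G) :
    G.IsLeftKanExtension α ↔
      ∀ K : D ⥤ H, Function.Bijective fun δ : G ⟶ K => α ≫ whiskerLeft L δ := by
  refine ⟨fun _ K => (G.homEquivOfIsLeftKanExtension α K).bijective, fun hα => ⟨⟨?_⟩⟩⟩
  choose desc desc_fac using fun E : LeftExtension L F => (hα E.right).2 E.hom
  refine Limits.IsInitial.ofUniqueHom (fun E => StructuredArrow.homMk (desc E) (desc_fac E))
    fun E m => ?_
  ext : 1
  exact (hα E.right).1 ((StructuredArrow.w m).trans (desc_fac E).symm)

lemma isLeftKanExtension_iff_of_homEquiv {L : C ⥤ D} {L' : C' ⥤ D} {F : C ⥤ H}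
    {F' : C' ⥤ H} (e : ∀ K : D ⥤ H, (F ⟶ L ⋙ K) ≃ (F' ⟶ L' ⋙ K))
    (he : ∀ {K K' : D ⥤ H} (β : F ⟶ L ⋙ K) (δ : K ⟶ K'),
      e K' (β ≫ whiskerLeft L δ) = e K β ≫ whiskerLeft L' δ)
    (G : D ⥤ H) (α : F ⟶ L ⋙ G) :
    G.IsLeftKanExtension α ↔ G.IsLeftKanExtension (e G α) := by
  simp only [isLeftKanExtension_iff_bijective]
  refine forall_congr' fun K => ?_
  have hcomp : (fun δ : G ⟶ K => e G α ≫ whiskerLeft L' δ) =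
      e K ∘ fun δ : G ⟶ K => α ≫ whiskerLeft L δ := funext fun δ => (he α δ).symm
  rw [hcomp, (e K).bijective.of_comp_iff']

end CategoryTheory.Functor

section Statement8

variable {A : Type u₁} {B : Type u₂} {C : Type u₃}
variable [Category.{v₁} A] [Category.{v₂} B] [Category.{v₃} C]

/-- The canonical functor `i_f : A ⥤ f/B`, `a ↦ (a, f.obj a, identity)`. -/
def iF (f : A ⥤ B) : A ⥤ Comma f (𝟭 B) where
  obj a := { left := a, right := f.obj a, hom := 𝟙 (f.obj a) }
  map φ := { left := φ, right := f.map φ, w := by simp }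

/-- Whiskering with `i_f` : it sends `α : p ⋙ g ⟶ q ⋙ h` to a natural transformation
`g ⟶ f ⋙ h` (using the strict equalities `i_f ⋙ p = 𝟭 A` and `i_f ⋙ q = f`). -/
def restrIF (f : A ⥤ B) (g : A ⥤ C) (h : B ⥤ C)
    (α : Comma.fst f (𝟭 B) ⋙ g ⟶ Comma.snd f (𝟭 B) ⋙ h) : g ⟶ f ⋙ h where
  app a := α.app ((iF f).obj a)
  naturality _ _ φ := α.naturality ((iF f).map φ)

variable (f : A ⥤ B) (g : A ⥤ C)

def iFObjToSelf (X : Comma f (𝟭 B)) : (iF f).obj X.left ⟶ X where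
  left := 𝟙 X.left
  right := X.hom
  w := by simp [iF]

def extendAlongIF (k : B ⥤ C) (δ : g ⟶ f ⋙ k) :
    Comma.fst f (𝟭 B) ⋙ g ⟶ Comma.snd f (𝟭 B) ⋙ k where
  app X := δ.app X.left ≫ k.map X.hom
  naturality X Y φ := by
    have hφ : X.hom ≫ φ.right = f.map φ.left ≫ Y.hom := φ.w.symm
    simp only [Functor.comp_map, Comma.fst_map, Comma.snd_map, Category.assoc, ← k.map_comp, hφ]
    rw [k.map_comp]
    exact δ.naturality_assoc φ.left _

def restrIFEquiv (k : B ⥤ C) :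
    (Comma.fst f (𝟭 B) ⋙ g ⟶ Comma.snd f (𝟭 B) ⋙ k) ≃ (g ⟶ f ⋙ k) where
  toFun := restrIF f g k
  invFun := extendAlongIF f g k
  left_inv β := by
    ext X
    have hβ := β.naturality (iFObjToSelf f X)
    dsimp [iFObjToSelf] at hβ
    erw [g.map_id, Category.id_comp] at hβ
    simpa [extendAlongIF, restrIF, iF] using hβ.symm
  right_inv δ := by
    ext a
    simp [extendAlongIF, restrIF, iF]

lemma restrIF_comp_whiskerLeft {h k : B ⥤ C}
    (α : Comma.fst f (𝟭 B) ⋙ g ⟶ Comma.snd f (𝟭 B) ⋙ h) (δ : h ⟶ k) :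
    restrIF f g k (α ≫ Functor.whiskerLeft (Comma.snd f (𝟭 B)) δ) =
      restrIF f g h α ≫ Functor.whiskerLeft f δ :=
  rfl

/-- A natural transformation `α : p ⋙ g ⟶ q ⋙ h` exhibits `h` as a left
Kan extension of `p ⋙ g` along `q` if and only if its whiskering with `i_f`, a natural
transformation `g ⟶ f ⋙ h`, exhibits `h` as a left Kan extension of `g` along `f`. -/
theorem stmt8 (f : A ⥤ B) (g : A ⥤ C) (h : B ⥤ C)
    (α : Comma.fst f (𝟭 B) ⋙ g ⟶ Comma.snd f (𝟭 B) ⋙ h) :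
    h.IsLeftKanExtension α ↔ h.IsLeftKanExtension (restrIF f g h α) :=
  Functor.isLeftKanExtension_iff_of_homEquiv (restrIFEquiv f g) (restrIF_comp_whiskerLeft f g) h α

end Statement8
end

section
/- Let f : A ⥤ B be a functor, let (d₁, E₁, c₁) be any span from X to Z, and let (d₂, E₂, c₂) be a two-sided discrete fibration from A × X to B × Z. Let f/B denote the comma category Comma f (𝟭 B) with projections p to A and q to B, and let i_f : A ⥤ f/B be the functor a ↦ (a, f.obj a, identity). Consider the span (f/B) × E₁ from A × X to B × Z with head (f/B) × E₁, left leg p × d₁ and right leg q × c₁, and the span f × E₁ with head A × E₁, left leg 𝟭_A × d₁ and right leg f × c₁. Then composition with the span morphism i_f × 𝟭_{E₁} : A × E₁ ⥤ (f/B) × E₁ is a bijection from the set of span morphisms (f/B) × E₁ → E₂ to the set of span morphisms f × E₁ → E₂. -/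
open CategoryTheory

universe w v v₁ v₂ v₃ v₄ v₅ u u₁ u₂ u₃ u₄ u₅

/-!
A span morphism `φ` out of `(f/B) × E₁` is determined by its restriction `ψ` along `i_f × 𝟭`:
every object `o = ((a, b, h), e)` receives the morphism `((𝟙, h), 𝟙)` from `(i_f a, e)`, which
the left leg sends to an identity, so `φ o` must be the codomain of the unique lift of `(h, 𝟙)`
out of `ψ (a, e)`. Conversely, lifting the natural transformation with components `(h, 𝟙)`
out of `ψ ∘ (fst × 𝟭)` produces such a `φ`, and on objects `(i_f a, e)` this lift is trivial.
Morphisms take care of themselves, because a two-sided discrete fibration is faithful on the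
pair of its legs.
-/

/-- A morphism is "an identity" when it is an `eqToHom` of an equality of objects. -/
def IsIdentityHom {C : Type u₁} [Category.{v₁} C] {x y : C} (φ : x ⟶ y) : Prop :=
  ∃ h : x = y, φ = eqToHom h

/-- A span of functors `A ⟵d E ⟶c B` is a two-sided discrete fibration from `A` to `B`:
(i) every `φ : a ⟶ d.obj e` has a unique lift with codomain `e` which is sent by `c` to an
identity; (ii) every `ψ : c.obj e ⟶ b` has a unique lift with domain `e` which is sent by
`d` to an identity; (iii) every morphism of `E` factors as a morphism sent by `d` to an
identity followed by a morphism sent by `c` to an identity (whence, by (i) and (ii), it is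
the lift of its `c`-image followed by the lift of its `d`-image). -/
structure IsTwoSidedDiscreteFibration {A : Type u₁} {E : Type u₂} {B : Type u₃}
    [Category.{v₁} A] [Category.{v₂} E] [Category.{v₃} B]
    (d : E ⥤ A) (c : E ⥤ B) : Prop where
  lift_left : ∀ (e : E) (a : A) (φ : a ⟶ d.obj e),
    ∃! p : Σ e' : E, e' ⟶ e,
      (∃ h : a = d.obj p.1, φ = eqToHom h ≫ d.map p.2) ∧ IsIdentityHom (c.map p.2)
  lift_right : ∀ (e : E) (b : B) (ψ : c.obj e ⟶ b),
    ∃! p : Σ e' : E, e ⟶ e',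
      (∃ h : c.obj p.1 = b, ψ = c.map p.2 ≫ eqToHom h) ∧ IsIdentityHom (d.map p.2)
  factor : ∀ {e₁ e₂ : E} (φ : e₁ ⟶ e₂),
    ∃ (e₃ : E) (u : e₁ ⟶ e₃) (v : e₃ ⟶ e₂),
      φ = u ≫ v ∧ IsIdentityHom (d.map u) ∧ IsIdentityHom (c.map v)

theorem CategoryTheory.Functor.map_map_of_comp_eq {C : Type u₁} {E : Type u₂} {P : Type u₃}
    [Category.{v₁} C] [Category.{v₂} E] [Category.{v₃} P] {F : C ⥤ E} {d : E ⥤ P}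
    {D : C ⥤ P} (h : F ⋙ d = D) {x y : C} (m : x ⟶ y) :
    d.map (F.map m) =
      eqToHom (Functor.congr_obj h x) ≫ D.map m ≫ eqToHom (Functor.congr_obj h y).symm :=
  Functor.congr_hom h m

namespace IsIdentityHom

variable {C : Type u₁} [Category.{v₁} C]

theorem id (x : C) : IsIdentityHom (𝟙 x) := ⟨rfl, rfl⟩

theorem comp {x y z : C} {φ : x ⟶ y} {φ' : y ⟶ z}
    (h : IsIdentityHom φ) (h' : IsIdentityHom φ') : IsIdentityHom (φ ≫ φ') := by
  obtain ⟨rfl, rfl⟩ := h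
  obtain ⟨rfl, rfl⟩ := h'
  exact ⟨rfl, by simp⟩

theorem map_of_comp_eq {E : Type u₂} {P : Type u₃} [Category.{v₂} E] [Category.{v₃} P]
    {F : C ⥤ E} {d : E ⥤ P} {D : C ⥤ P} (hF : F ⋙ d = D) {x y : C} {g : x ⟶ y}
    (hg : IsIdentityHom (D.map g)) : IsIdentityHom (d.map (F.map g)) := by
  obtain ⟨hxy, hg⟩ := hg
  exact ⟨(Functor.congr_obj hF x).trans (hxy.trans (Functor.congr_obj hF y).symm),
    by simp [Functor.map_map_of_comp_eq hF, hg]⟩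

end IsIdentityHom

namespace IsTwoSidedDiscreteFibration

variable {P : Type u₁} {E : Type u₂} {Q : Type u₃}
    [Category.{v₁} P] [Category.{v₂} E] [Category.{v₃} Q]
    {d : E ⥤ P} {c : E ⥤ Q}

theorem rightLift_unique (hf : IsTwoSidedDiscreteFibration d c) {e x x' : E}
    (u : e ⟶ x) (u' : e ⟶ x')
    (hu : IsIdentityHom (d.map u)) (hu' : IsIdentityHom (d.map u'))
    (hx : c.obj x = c.obj x') (hc : c.map u' = c.map u ≫ eqToHom hx) :
    (⟨x, u⟩ : Σ x, e ⟶ x) = ⟨x', u'⟩ :=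
  (hf.lift_right e (c.obj x) (c.map u)).unique ⟨⟨rfl, by simp⟩, hu⟩
    ⟨⟨hx.symm, by simp [hc]⟩, hu'⟩

theorem leftLift_unique (hf : IsTwoSidedDiscreteFibration d c) {e x x' : E}
    (v : x ⟶ e) (v' : x' ⟶ e)
    (hv : IsIdentityHom (c.map v)) (hv' : IsIdentityHom (c.map v'))
    (hx : d.obj x = d.obj x') (hd : d.map v = eqToHom hx ≫ d.map v') :
    (⟨x, v⟩ : Σ x, x ⟶ e) = ⟨x', v'⟩ :=
  (hf.lift_left e (d.obj x) (d.map v)).unique ⟨⟨rfl, by simp⟩, hv⟩ ⟨⟨hx, hd⟩, hv'⟩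

theorem hom_ext (hf : IsTwoSidedDiscreteFibration d c) {x y : E} {m m' : x ⟶ y}
    (hd : d.map m = d.map m') (hc : c.map m = c.map m') : m = m' := by
  obtain ⟨w, u, v, rfl, hu, hw, hv⟩ := hf.factor m
  obtain ⟨w', u', v', rfl, hu', hw', hv'⟩ := hf.factor m'
  simp only [Functor.map_comp, hv, hv'] at hc
  obtain ⟨rfl, hu_eq⟩ := Sigma.mk.inj_iff.1 <|
    hf.rightLift_unique u u' hu hu' (hw.trans hw'.symm)
      (by rw [← cancel_mono (eqToHom hw')]; simp [← hc])
  obtain rfl := eq_of_heq hu_eq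
  obtain ⟨_, hu⟩ := hu
  obtain ⟨-, hv_eq⟩ := Sigma.mk.inj_iff.1 <|
    hf.leftLift_unique v v' ⟨hw, hv⟩ ⟨hw', hv'⟩ rfl (by simpa [hu, cancel_epi] using hd)
  rw [eq_of_heq hv_eq]

theorem exists_hom (hf : IsTwoSidedDiscreteFibration d c) {x' x y : E}
    (r : x' ⟶ x) (hr : IsIdentityHom (d.map r)) (t : x' ⟶ y)
    (p : d.obj x ⟶ d.obj y) (q : c.obj x ⟶ c.obj y)
    (hp : d.map t = d.map r ≫ p) (hq : c.map t = c.map r ≫ q) :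
    ∃ n : x ⟶ y, d.map n = p ∧ c.map n = q := by
  obtain ⟨w, u, v, rfl, hu, hw, hv⟩ := hf.factor t
  obtain ⟨⟨w', u'⟩, ⟨⟨hw', hq'⟩, hu'⟩, -⟩ := hf.lift_right x (c.obj y) q
  obtain ⟨rfl, -⟩ := Sigma.mk.inj_iff.1 <|
    hf.rightLift_unique u (r ≫ u') hu (by rw [Functor.map_comp]; exact hr.comp hu')
      (hw.trans hw'.symm) (by
        rw [← cancel_mono (eqToHom hw'), Functor.map_comp, Category.assoc, ← hq', ← hq]
        simp [hv])
  obtain ⟨hu₀, hu⟩ := hu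
  obtain ⟨hr₀, hr⟩ := hr
  obtain ⟨_, hu'⟩ := hu'
  rw [Functor.map_comp, hu, hr] at hp
  refine ⟨u' ≫ v, ?_, by simp [hq', hv]⟩
  have hv' : d.map v = eqToHom (hu₀.symm.trans hr₀) ≫ p := by
    simpa using eqToHom hu₀.symm ≫= hp
  simp [hu', hv']

variable {C : Type u₄} [Category.{v₄} C] {D : C ⥤ P} {K : C ⥤ Q}

theorem functor_ext (hf : IsTwoSidedDiscreteFibration d c) {F F' : C ⥤ E}
    (hd : F ⋙ d = D) (hd' : F' ⋙ d = D) (hc : F ⋙ c = K) (hc' : F' ⋙ c = K)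
    (hobj : ∀ x, F.obj x = F'.obj x) : F = F' :=
  CategoryTheory.Functor.ext hobj fun _ _ m => hf.hom_ext
    (by simp [Functor.map_map_of_comp_eq hd, Functor.map_map_of_comp_eq hd', eqToHom_map])
    (by simp [Functor.map_map_of_comp_eq hc, Functor.map_map_of_comp_eq hc', eqToHom_map])

theorem obj_eq_of_isIdentityHom (hf : IsTwoSidedDiscreteFibration d c) {F F' : C ⥤ E}
    (hd : F ⋙ d = D) (hd' : F' ⋙ d = D) (hc : F ⋙ c = K) (hc' : F' ⋙ c = K)
    {x y : C} (g : x ⟶ y) (hg : IsIdentityHom (D.map g)) (hx : F.obj x = F'.obj x) :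
    F.obj y = F'.obj y :=
  congrArg Sigma.fst <| hf.rightLift_unique (F.map g) (eqToHom hx ≫ F'.map g)
    (.map_of_comp_eq hd hg)
    (by rw [Functor.map_comp]; exact .comp ⟨_, eqToHom_map _ _⟩ (.map_of_comp_eq hd' hg))
    (by simpa using Functor.congr_obj (hc.trans hc'.symm) y)
    (by simp [Functor.map_map_of_comp_eq hc, Functor.map_map_of_comp_eq hc', eqToHom_map])

theorem exists_functor (hf : IsTwoSidedDiscreteFibration d c) (obj : C → E)
    (hD : ∀ x, d.obj (obj x) = D.obj x) (hK : ∀ x, c.obj (obj x) = K.obj x)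
    (hmap : ∀ {x y} (m : x ⟶ y), ∃ n : obj x ⟶ obj y,
      d.map n = eqToHom (hD x) ≫ D.map m ≫ eqToHom (hD y).symm ∧
      c.map n = eqToHom (hK x) ≫ K.map m ≫ eqToHom (hK y).symm) :
    ∃ F : C ⥤ E, F ⋙ d = D ∧ F ⋙ c = K ∧ ∀ x, F.obj x = obj x := by
  choose N hNd hNc using fun x y (m : x ⟶ y) => hmap m
  let F : C ⥤ E :=
    { obj
      map := N _ _
      map_id := fun x => hf.hom_ext (by simp [hNd]) (by simp [hNc])
      map_comp := fun m m' => hf.hom_ext (by simp [hNd]) (by simp [hNc]) }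
  exact ⟨F, CategoryTheory.Functor.ext hD fun _ _ => hNd _ _,
    CategoryTheory.Functor.ext hK fun _ _ => hNc _ _, fun _ => rfl⟩

theorem exists_functor_of_natTrans (hf : IsTwoSidedDiscreteFibration d c) {G : C ⥤ E}
    {K₀ : C ⥤ Q} (hd : G ⋙ d = D) (hc : G ⋙ c = K₀) (τ : K₀ ⟶ K) :
    ∃ F : C ⥤ E, F ⋙ d = D ∧ F ⋙ c = K ∧
      ∀ x, IsIdentityHom (τ.app x) → F.obj x = G.obj x := by
  choose L hL using fun x =>
    (hf.lift_right (G.obj x) (K.obj x) (eqToHom (Functor.congr_obj hc x) ≫ τ.app x)).exists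
  choose hK hLc using fun x => (hL x).1
  choose hdL hLd using fun x => (hL x).2
  have hD x : d.obj (L x).1 = D.obj x := (hdL x).symm.trans (Functor.congr_obj hd x)
  have hLc' x : c.map (L x).2 =
      eqToHom (Functor.congr_obj hc x) ≫ τ.app x ≫ eqToHom (hK x).symm := by
    rw [← cancel_mono (eqToHom (hK x))]
    simp [← hLc x]
  obtain ⟨F, hFd, hFc, hF⟩ := hf.exists_functor (fun x => (L x).1) hD hK fun {x y} m =>
    hf.exists_hom (L x).2 (hL x).2 (G.map m ≫ (L y).2) _ _
      (by simp [hLd, Functor.map_map_of_comp_eq hd m])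
      (by simp [hLc', Functor.map_map_of_comp_eq hc m])
  refine ⟨F, hFd, hFc, fun x ⟨hx, hτ⟩ => (hF x).trans ?_⟩
  refine (congrArg Sigma.fst <| hf.rightLift_unique (𝟙 (G.obj x)) (L x).2
    (by rw [d.map_id]; exact .id _) (hL x).2 ((Functor.congr_obj hc x).trans
      (hx.trans (hK x).symm)) (by simp [hLc', hτ])).symm

end IsTwoSidedDiscreteFibration

section Statement19

variable {A : Type u₁} {B : Type u₂} {X : Type u₃} {Z : Type u₄} {E₁ : Type u₅} {E₂ : Type u}
variable [Category.{v₁} A] [Category.{v₂} B] [Category.{v₃} X]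
variable [Category.{v₄} Z] [Category.{v₅} E₁] [Category.{v} E₂]

namespace IsTwoSidedDiscreteFibration

variable {f : A ⥤ B} {d₁ : E₁ ⥤ X} {c₁ : E₁ ⥤ Z} {d₂ : E₂ ⥤ A × X} {c₂ : E₂ ⥤ B × Z}

theorem ext_of_iF_prod_comp_eq (h₂ : IsTwoSidedDiscreteFibration d₂ c₂)
    {φ φ' : Comma f (𝟭 B) × E₁ ⥤ E₂}
    (hd : φ ⋙ d₂ = (Comma.fst f (𝟭 B)).prod d₁) (hd' : φ' ⋙ d₂ = (Comma.fst f (𝟭 B)).prod d₁)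
    (hc : φ ⋙ c₂ = (Comma.snd f (𝟭 B)).prod c₁) (hc' : φ' ⋙ c₂ = (Comma.snd f (𝟭 B)).prod c₁)
    (h : (iF f).prod (𝟭 E₁) ⋙ φ = (iF f).prod (𝟭 E₁) ⋙ φ') : φ = φ' := by
  refine h₂.functor_ext hd hd' hc hc' fun o => ?_
  let ε : ((iF f).prod (𝟭 E₁)).obj (o.1.left, o.2) ⟶ o :=
    (⟨𝟙 o.1.left, o.1.hom, by simp [iF]⟩, 𝟙 o.2)
  exact h₂.obj_eq_of_isIdentityHom hd hd' hc hc' ε (by simp [ε]; exact .id _)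
    (Functor.congr_obj h _)

theorem exists_iF_prod_comp_eq (h₂ : IsTwoSidedDiscreteFibration d₂ c₂)
    {ψ : A × E₁ ⥤ E₂} (hd : ψ ⋙ d₂ = (𝟭 A).prod d₁) (hc : ψ ⋙ c₂ = f.prod c₁) :
    ∃ φ : Comma f (𝟭 B) × E₁ ⥤ E₂,
      (φ ⋙ d₂ = (Comma.fst f (𝟭 B)).prod d₁ ∧ φ ⋙ c₂ = (Comma.snd f (𝟭 B)).prod c₁) ∧
      (iF f).prod (𝟭 E₁) ⋙ φ = ψ := by
  obtain ⟨φ, hφd, hφc, hφ⟩ := h₂.exists_functor_of_natTrans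
    (G := (Comma.fst f (𝟭 B)).prod (𝟭 E₁) ⋙ ψ) (by rw [Functor.assoc, hd])
    (by rw [Functor.assoc, hc]; rfl) (NatTrans.prod (Comma.natTrans f (𝟭 B)) (𝟙 c₁))
  rw [Functor.comp_id] at hφc
  refine ⟨φ, ⟨hφd, hφc⟩, h₂.functor_ext (by rw [Functor.assoc, hφd]; rfl) hd
    (by rw [Functor.assoc, hφc]; rfl) hc fun x => hφ _ ⟨rfl, rfl⟩⟩

end IsTwoSidedDiscreteFibration

/-- Let `(d₁, E₁, c₁)` be a span from `X` to `Z` and `(d₂, E₂, c₂)` a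
two-sided discrete fibration from `A × X` to `B × Z`.  Composition with the span morphism
`i_f × 𝟙 : f × E₁ ⟶ (f/B) × E₁` sends span morphisms `(f/B) × E₁ ⟶ E₂` to span
morphisms `f × E₁ ⟶ E₂`, and this assignment is a bijection. -/
theorem stmt19 (f : A ⥤ B) (d₁ : E₁ ⥤ X) (c₁ : E₁ ⥤ Z)
    (d₂ : E₂ ⥤ A × X) (c₂ : E₂ ⥤ B × Z)
    (h₂ : IsTwoSidedDiscreteFibration d₂ c₂) :
    (∀ φ : Comma f (𝟭 B) × E₁ ⥤ E₂,
        (φ ⋙ d₂ = (Comma.fst f (𝟭 B)).prod d₁ ∧ φ ⋙ c₂ = (Comma.snd f (𝟭 B)).prod c₁) →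
        (((iF f).prod (𝟭 E₁) ⋙ φ) ⋙ d₂ = (𝟭 A).prod d₁ ∧
          ((iF f).prod (𝟭 E₁) ⋙ φ) ⋙ c₂ = f.prod c₁)) ∧
    (∀ ψ : A × E₁ ⥤ E₂,
        (ψ ⋙ d₂ = (𝟭 A).prod d₁ ∧ ψ ⋙ c₂ = f.prod c₁) →
        ∃! φ : Comma f (𝟭 B) × E₁ ⥤ E₂,
          (φ ⋙ d₂ = (Comma.fst f (𝟭 B)).prod d₁ ∧
            φ ⋙ c₂ = (Comma.snd f (𝟭 B)).prod c₁) ∧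
          (iF f).prod (𝟭 E₁) ⋙ φ = ψ) := by
  refine ⟨fun φ ⟨hd, hc⟩ => ⟨by rw [Functor.assoc, hd]; rfl, by rw [Functor.assoc, hc]; rfl⟩,
    fun ψ ⟨hd, hc⟩ => ?_⟩
  obtain ⟨φ, ⟨hφd, hφc⟩, hφ⟩ := h₂.exists_iF_prod_comp_eq hd hc
  exact ⟨φ, ⟨⟨hφd, hφc⟩, hφ⟩, fun φ' ⟨⟨hφd', hφc'⟩, hφ'⟩ =>
    h₂.ext_of_iF_prod_comp_eq hφd' hφd hφc' hφc (hφ'.trans hφ.symm)⟩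

end Statement19
end
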